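/- Let C be a commutative ring in which 2 is invertible, F a finitely generated projective C-module, and R ⊆ F ⊗_C F a C-submodule which is a direct summand of the submodule Sym_2(F) of symmetric tensors. Then the canonical C-algebra homomorphism φ : T_C(F)/(R) → Cℓ_A(E,q), determined by φ(class of v) = ι(v ⊗ 1) for v ∈ F, is surjective. -/

import Mathlib

/-! The image of `φ` is a `C`-subalgebra containing every `ι (1 ⊗ v)`. Since
`ι x * ι y + ι y * ι x = B (x, y)`, it contains the scalars `B (1 ⊗ u, 1 ⊗ v) = j [u ⊗ v + v ⊗ u]`,
hence all of `j Q`, because these classes span `Q`. The universal property of `A` makes `A`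
generated by `j Q` as a `C`-algebra, so the image contains `A`, and `A` together with the
`ι (1 ⊗ v)` generates `Cℓ_A(E, q)`. -/

open TensorProduct

noncomputable section

universe u

variable (C : Type u) [CommRing C]

/-- The submodule of symmetric tensors of `F ⊗[C] F`, spanned by the `u ⊗ v + v ⊗ u`. -/
def symTensors (F : Type u) [AddCommGroup F] [Module C F] : Submodule C (F ⊗[C] F) :=
  Submodule.span C {z | ∃ u v : F, z = u ⊗ₜ[C] v + v ⊗ₜ[C] u}

variable (F : Type u) [AddCommGroup F] [Module C F]
variable (Rsub : Submodule C (F ⊗[C] F))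

/-- `Q := Sym₂ F / R`. -/
abbrev SymQuot : Type u :=
  ↥(symTensors C F) ⧸ Rsub.comap (symTensors C F).subtype

/-- The symmetrized tensor `(u, v) ↦ u ⊗ v + v ⊗ u`, as a bilinear map into `Sym₂ F`. -/
def symMk : F →ₗ[C] F →ₗ[C] ↥(symTensors C F) :=
  LinearMap.mk₂ C
    (fun u v => ⟨u ⊗ₜ[C] v + v ⊗ₜ[C] u, Submodule.subset_span ⟨u, v, rfl⟩⟩)
    (fun u u' v => Subtype.ext <| by
      simp only [Submodule.coe_add, TensorProduct.add_tmul, TensorProduct.tmul_add]; abel)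
    (fun c u v => Subtype.ext <| by
      simp only [SetLike.val_smul, TensorProduct.smul_tmul', TensorProduct.tmul_smul,
        smul_add])
    (fun u v v' => Subtype.ext <| by
      simp only [Submodule.coe_add, TensorProduct.add_tmul, TensorProduct.tmul_add]; abel)
    (fun c u v => Subtype.ext <| by
      simp only [SetLike.val_smul, TensorProduct.smul_tmul', TensorProduct.tmul_smul,
        smul_add])

variable (A : Type u) [CommRing A] [Algebra C A]
variable (j : SymQuot C F Rsub →ₗ[C] A)

/-- The `C`-bilinear map `F × F → A`, `(u,v) ↦ j (class of u ⊗ v + v ⊗ u)`. -/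
def bil0 : F →ₗ[C] F →ₗ[C] A :=
  (symMk C F).compr₂ (j ∘ₗ (Rsub.comap (symTensors C F).subtype).mkQ)

/-- The `A`-bilinear extension of `bil0` to `E = A ⊗[C] F`. -/
def bilE : (A ⊗[C] F) →ₗ[A] (A ⊗[C] F) →ₗ[A] A :=
  LinearMap.liftBaseChange A
    (((LinearMap.liftBaseChangeEquiv A).restrictScalars C).toLinearMap ∘ₗ
      bil0 C F Rsub A j)

/-- The `A`-valued quadratic form `q (x) = ½ ⬝ B (x, x)` on `E = A ⊗[C] F`. -/
def cliffordQ [Invertible (2 : C)] : QuadraticForm A (A ⊗[C] F) :=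
  LinearMap.BilinMap.toQuadraticMap
    ((algebraMap C A (⅟ 2) : A) • bilE C F Rsub A j)

/-- The canonical map `F ⊗[C] F → T_C(F)`, `u ⊗ v ↦ ι u * ι v`. -/
def tensorSquareMul : F ⊗[C] F →ₗ[C] TensorAlgebra C F :=
  TensorProduct.lift
    ((LinearMap.mul C (TensorAlgebra C F)).compl₁₂ (TensorAlgebra.ι C) (TensorAlgebra.ι C))

/-- The relation on `T_C(F)` whose ring quotient is `T_C(F)/(R)`, the quotient by the
two-sided ideal generated by `R ⊆ F ⊗ F ⊆ T_C(F)`. -/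
def relOfR : TensorAlgebra C F → TensorAlgebra C F → Prop :=
  fun x y => (∃ r ∈ Rsub, x = tensorSquareMul C F r) ∧ y = 0

universe v

theorem Algebra.adjoin_range_eq_top_of_existsUnique_lift {R M : Type*} {A : Type v} [CommRing R]
    [AddCommGroup M] [Module R M] [CommRing A] [Algebra R A] {j : M →ₗ[R] A}
    (hUP : ∀ (B : Type v) [CommRing B] [Algebra R B] (g : M →ₗ[R] B),
      ∃! h : A →ₐ[R] B, h.toLinearMap ∘ₗ j = g) :
    Algebra.adjoin R (Set.range j) = ⊤ := by
  set S := Algebra.adjoin R (Set.range j)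
  obtain ⟨h, hh, -⟩ :=
    hUP S (j.codRestrict S.toSubmodule fun x => Algebra.subset_adjoin ⟨x, rfl⟩)
  obtain ⟨h₀, -, huniq⟩ := hUP A j
  have hsection : S.val.comp h = AlgHom.id R A :=
    (huniq _ (by ext x; exact congr($hh x))).trans (huniq _ rfl).symm
  refine Algebra.eq_top_iff.2 fun a => ?_
  rw [← AlgHom.id_apply (R := R) a, ← hsection]
  exact (h a).2

theorem CliffordAlgebra.subalgebra_eq_top_of_algebraMap_mem_of_ι_one_tmul_mem
    {R A M : Type*} [CommRing R] [CommRing A] [Algebra R A] [AddCommGroup M] [Module R M]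
    {Q : QuadraticForm A (A ⊗[R] M)} (S : Subalgebra R (CliffordAlgebra Q))
    (halg : ∀ a : A, algebraMap A _ a ∈ S) (hι : ∀ v : M, ι Q (1 ⊗ₜ v) ∈ S) : S = ⊤ := by
  have hιE : ∀ e : A ⊗[R] M, ι Q e ∈ S := fun e => by
    induction e with
    | zero => simp
    | tmul a v =>
      rw [← mul_one a, ← smul_eq_mul, ← TensorProduct.smul_tmul', map_smul, Algebra.smul_def]
      exact mul_mem (halg a) (hι v)
    | add x y hx hy => simpa using add_mem hx hy
  refine Algebra.eq_top_iff.2 fun x => ?_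
  induction x using CliffordAlgebra.induction with
  | algebraMap a => exact halg a
  | ι e => exact hιE e
  | mul x y hx hy => exact mul_mem hx hy
  | add x y hx hy => exact add_mem hx hy

section

variable {C F Rsub A j}

theorem span_range_mkQ_symMk :
    Submodule.span C (Set.range fun p : F × F =>
      (Rsub.comap (symTensors C F).subtype).mkQ (symMk C F p.1 p.2)) = ⊤ := by
  refine Submodule.eq_top_iff'.2 fun x => ?_
  obtain ⟨⟨y, hy⟩, rfl⟩ := Submodule.mkQ_surjective _ x
  induction hy using Submodule.span_induction with
  | mem z hz =>
    obtain ⟨u, v, rfl⟩ := hz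
    exact Submodule.subset_span ⟨(u, v), rfl⟩
  | zero => exact Submodule.zero_mem _
  | add y z _ _ hy hz => exact Submodule.add_mem _ hy hz
  | smul c y _ hy => exact Submodule.smul_mem _ c hy

theorem bil0_comm (u v : F) : bil0 C F Rsub A j u v = bil0 C F Rsub A j v u := by
  simp only [bil0, LinearMap.compr₂_apply]
  rw [show symMk C F u v = symMk C F v u from Subtype.ext (add_comm _ _)]

theorem bilE_one_tmul (u v : F) :
    bilE C F Rsub A j (1 ⊗ₜ u) (1 ⊗ₜ v) = bil0 C F Rsub A j u v := by
  simp [bilE, LinearMap.liftBaseChange_tmul]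

theorem polar_cliffordQ_one_tmul [Invertible (2 : C)] (u v : F) :
    QuadraticMap.polar (cliffordQ C F Rsub A j) (1 ⊗ₜ u) (1 ⊗ₜ v) = bil0 C F Rsub A j u v := by
  rw [cliffordQ, LinearMap.BilinMap.polar_toQuadraticMap]
  simp only [LinearMap.smul_apply, bilE_one_tmul, bil0_comm v u, smul_eq_mul,
    ← two_mul, ← mul_assoc, ← map_ofNat (algebraMap C A) 2, ← map_mul, mul_invOf_self, map_one,
    one_mul]

end

theorem algHom_tensorQuot_to_clifford_surjective
    [Invertible (2 : C)]
    (hUP : ∀ (B : Type u) [CommRing B] [Algebra C B] (g : SymQuot C F Rsub →ₗ[C] B),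
      ∃! h : A →ₐ[C] B, (h.toLinearMap ∘ₗ j : SymQuot C F Rsub →ₗ[C] B) = g)
    (φ : RingQuot (relOfR C F Rsub) →ₐ[C] CliffordAlgebra (cliffordQ C F Rsub A j))
    (hφ : ∀ v : F,
      φ (RingQuot.mkAlgHom C (relOfR C F Rsub) (TensorAlgebra.ι C v))
        = CliffordAlgebra.ι (cliffordQ C F Rsub A j) ((1 : A) ⊗ₜ[C] v)) :
    Function.Surjective φ := by
  set Cl := CliffordAlgebra (cliffordQ C F Rsub A j)
  have hι (v : F) : CliffordAlgebra.ι _ ((1 : A) ⊗ₜ[C] v) ∈ φ.range := ⟨_, hφ v⟩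
  have hbil (u v : F) : algebraMap A Cl (bil0 C F Rsub A j u v) ∈ φ.range := by
    rw [← polar_cliffordQ_one_tmul, ← CliffordAlgebra.ι_mul_ι_add_swap]
    exact add_mem (mul_mem (hι u) (hι v)) (mul_mem (hι v) (hι u))
  have hj : Set.range j ⊆ (φ.range.comap (IsScalarTower.toAlgHom C A Cl) : Set A) := by
    let L := ((Algebra.linearMap A Cl).restrictScalars C) ∘ₗ j
    have hQ : ⊤ ≤ φ.range.toSubmodule.comap L := by
      rw [← span_range_mkQ_symMk, Submodule.span_le]
      rintro _ ⟨⟨u, v⟩, rfl⟩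
      exact hbil u v
    rintro _ ⟨x, rfl⟩
    exact hQ Submodule.mem_top
  have halg (a : A) : algebraMap A Cl a ∈ φ.range := Algebra.adjoin_le hj <| by
    rw [Algebra.adjoin_range_eq_top_of_existsUnique_lift hUP]
    exact Algebra.mem_top
  exact (AlgHom.range_eq_top φ).1
    (CliffordAlgebra.subalgebra_eq_top_of_algebraMap_mem_of_ι_one_tmul_mem _ halg hι)

end
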